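/- arXiv:1211.7039 — 5 statements merged into one kernel-verified Lean document; each statement's English description precedes it below -/
import Mathlib

section
/- Let Ω ⊆ ℝ^N be open and let T: Ω → ℝ be continuous and such that epi(T) has locally positive reach. Let x̄ ∈ Ω. Then T is non-Lipschitz at x̄ if and only if there exists a nonzero vector ζ ∈ ℝ^N such that (ζ, 0) belongs to the proximal normal cone to epi(T) at (x̄, T(x̄)). -/
open scoped RealInnerProductSpace ENNReal NNReal
open MeasureTheory Filter

noncomputable section

/-- The proximal normal cone to `K` at `x`: vectors `v` such that for some `σ ≥ 0`,
`⟪v, y - x⟫ ≤ σ ‖y - x‖²` for all `y ∈ K`. -/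
def proxNormalCone {H : Type*} [NormedAddCommGroup H] [InnerProductSpace ℝ H]
    (K : Set H) (x : H) : Set H :=
  {v | ∃ σ : ℝ, 0 ≤ σ ∧ ∀ y ∈ K, ⟪v, y - x⟫ ≤ σ * ‖y - x‖ ^ 2}

/-- `K` has locally positive reach: there is a continuous `φ : K → [0,∞)` with
`⟪v, y - x⟫ ≤ φ x ‖v‖ ‖y - x‖²` for all `x, y ∈ K` and `v ∈ N_K(x)`. -/
def HasLocPosReach {H : Type*} [NormedAddCommGroup H] [InnerProductSpace ℝ H]
    (K : Set H) : Prop :=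
  ∃ φ : H → ℝ, ContinuousOn φ K ∧ (∀ x ∈ K, 0 ≤ φ x) ∧
    ∀ x ∈ K, ∀ v ∈ proxNormalCone K x, ∀ y ∈ K, ⟪v, y - x⟫ ≤ φ x * ‖v‖ * ‖y - x‖ ^ 2

/-- `ℝ^N` with the Euclidean inner product. -/
abbrev Euc (N : ℕ) := EuclideanSpace ℝ (Fin N)

/-- The pair `(x, β)` as an element of `E × ℝ` equipped with the L² (inner product) norm. -/
def pairLp {E : Type*} [NormedAddCommGroup E] [InnerProductSpace ℝ E] (x : E) (β : ℝ) :
    WithLp 2 (E × ℝ) := (WithLp.equiv 2 (E × ℝ)).symm (x, β)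

/-- The epigraph of `f` restricted to the domain `D`: `{(x, β) : x ∈ D, β ≥ f x}`. -/
def epigraphOn {E : Type*} [NormedAddCommGroup E] [InnerProductSpace ℝ E]
    (f : E → ℝ) (D : Set E) : Set (WithLp 2 (E × ℝ)) :=
  {p | (WithLp.equiv 2 (E × ℝ) p).1 ∈ D ∧
    f ((WithLp.equiv 2 (E × ℝ) p).1) ≤ (WithLp.equiv 2 (E × ℝ) p).2}

/-- `f` is non-Lipschitz at `x`: there are sequences `xs i ≠ ys i` converging to `x` with
`limsup |f (ys i) - f (xs i)| / ‖ys i - xs i‖ = +∞`. -/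
def NonLipschitzAt {X : Type*} [NormedAddCommGroup X] (f : X → ℝ) (x : X) : Prop :=
  ∃ xs ys : ℕ → X, (∀ i, xs i ≠ ys i) ∧ Tendsto xs atTop (nhds x) ∧ Tendsto ys atTop (nhds x) ∧
    limsup (fun i => ((|f (ys i) - f (xs i)| / ‖ys i - xs i‖ : ℝ) : EReal)) atTop = ⊤

/-!
Near each graph point the epigraph is locally compact, and positive reach makes limits of proximal
normals proximal normals. If `epi T` has no horizontal proximal normal at `(x̄, T x̄)`, compactness
of the unit sphere bounds the slope `-v₂ / ‖v‖` of every proximal normal `v` at nearby points of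
the epigraph from below by some `s > 0`. Projecting the points `(x, T x - t)` onto the epigraph and
letting `t → 0` then yields, at every graph point `(x, T x)` near `(x̄, T x̄)`, a unit proximal
normal of slope at least `s`; testing its positive reach inequality against `(y, T y)` gives
`s (T x - T y) ≤ 4 ‖x - y‖`, so `T` is Lipschitz near `x̄`.

Conversely, if `(ζ, 0)` is a proximal normal, then along `y = x̄ + t ζ / ‖ζ‖` the proximal
inequality reads `t ‖ζ‖ ≤ σ (t² + (T y - T x̄)²)`, so `|T y - T x̄| / t → ∞` as `t → 0`.
-/

open Metric Topology

section ProximalNormal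

variable {H : Type*} [NormedAddCommGroup H] [InnerProductSpace ℝ H] {K : Set H}

theorem smul_mem_proxNormalCone {q v : H} {c : ℝ} (hc : 0 ≤ c) (hv : v ∈ proxNormalCone K q) :
    c • v ∈ proxNormalCone K q := by
  obtain ⟨σ, hσ, h⟩ := hv
  refine ⟨c * σ, mul_nonneg hc hσ, fun y hy => ?_⟩
  rw [real_inner_smul_left, mul_assoc]
  exact mul_le_mul_of_nonneg_left (h y hy) hc

theorem mem_proxNormalCone_of_forall_norm_sub_le {q v : H} {σ δ : ℝ} (hσ : 0 ≤ σ) (hδ : 0 < δ)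
    (h : ∀ w ∈ K, ‖w - q‖ ≤ δ → ⟪v, w - q⟫ ≤ σ * ‖w - q‖ ^ 2) :
    v ∈ proxNormalCone K q := by
  refine ⟨max σ (‖v‖ / δ), hσ.trans (le_max_left _ _), fun w hw => ?_⟩
  rcases le_or_gt ‖w - q‖ δ with hnear | hfar
  · exact (h w hw hnear).trans (by gcongr; exact le_max_left _ _)
  · calc ⟪v, w - q⟫ ≤ ‖v‖ * ‖w - q‖ := real_inner_le_norm _ _
      _ ≤ ‖v‖ / δ * ‖w - q‖ ^ 2 := by
        rw [div_mul_eq_mul_div, le_div_iff₀ hδ]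
        have hvw : 0 ≤ ‖v‖ * ‖w - q‖ := by positivity
        nlinarith [mul_le_mul_of_nonneg_left hfar.le hvw]
      _ ≤ max σ (‖v‖ / δ) * ‖w - q‖ ^ 2 := by gcongr; exact le_max_right _ _

theorem sub_mem_proxNormalCone_of_isMinOn {S : Set H} {z q : H} {δ : ℝ} (hδ : 0 < δ)
    (hmin : IsMinOn (fun w => ‖z - w‖) S q) (hloc : ∀ w ∈ K, ‖w - q‖ ≤ δ → w ∈ S) :
    z - q ∈ proxNormalCone K q := by
  refine mem_proxNormalCone_of_forall_norm_sub_le (σ := 1 / 2) (by norm_num) hδ fun w hw hwq => ?_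
  have hle : ‖z - q‖ ≤ ‖z - w‖ := hmin (hloc w hw hwq)
  have hexp : ‖z - w‖ ^ 2 = ‖z - q‖ ^ 2 - 2 * ⟪z - q, w - q⟫ + ‖w - q‖ ^ 2 := by
    rw [← norm_sub_sq_real, sub_sub_sub_cancel_right]
  nlinarith [norm_nonneg (z - q)]

theorem HasLocPosReach.mem_proxNormalCone_of_tendsto (hK : HasLocPosReach K) {q v : ℕ → H}
    {q₀ v₀ : H} (hq : ∀ i, q i ∈ K) (hq₀ : q₀ ∈ K) (hv : ∀ i, v i ∈ proxNormalCone K (q i))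
    (hqt : Tendsto q atTop (𝓝 q₀)) (hvt : Tendsto v atTop (𝓝 v₀)) :
    v₀ ∈ proxNormalCone K q₀ := by
  obtain ⟨φ, hφc, hφ0, hN⟩ := hK
  refine ⟨φ q₀ * ‖v₀‖, mul_nonneg (hφ0 q₀ hq₀) (norm_nonneg _), fun w hw => ?_⟩
  have hφt : Tendsto (fun i => φ (q i)) atTop (𝓝 (φ q₀)) :=
    (hφc q₀ hq₀).tendsto.comp (tendsto_nhdsWithin_iff.mpr ⟨hqt, .of_forall hq⟩)
  refine le_of_tendsto_of_tendsto' (hvt.inner (tendsto_const_nhds.sub hqt))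
    ((hφt.mul hvt.norm).mul ((tendsto_const_nhds.sub hqt).norm.pow 2))
    fun i => hN (q i) (hq i) (v i) (hv i) w hw

/-- Positive reach makes the bundle of unit proximal normals closed; `g ≤ 0` is a closed condition
on the normals that is carried to the limit. -/
theorem HasLocPosReach.exists_unit_mem_proxNormalCone [ProperSpace H] (hK : HasLocPosReach K)
    {q₀ : H} (hq₀ : q₀ ∈ K) {g : H → ℝ} (hg : Continuous g)
    (h : ∀ δ > 0, ∃ q ∈ K, ‖q - q₀‖ < δ ∧ ∃ v ∈ proxNormalCone K q, ‖v‖ = 1 ∧ g v < δ) :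
    ∃ v ∈ proxNormalCone K q₀, ‖v‖ = 1 ∧ g v ≤ 0 := by
  choose q hqK hqt v hvN hv1 hgv using fun i : ℕ => h (1 / (i + 1)) Nat.one_div_pos_of_nat
  obtain ⟨v₀, hv₀, ψ, hψ, hvψ⟩ :=
    (isCompact_sphere (0 : H) 1).tendsto_subseq (x := v) fun i => by simpa using hv1 i
  have hδψ : Tendsto (fun i => 1 / ((ψ i : ℝ) + 1)) atTop (𝓝 0) :=
    tendsto_one_div_add_atTop_nhds_zero_nat.comp hψ.tendsto_atTop
  have hqψ : Tendsto (q ∘ ψ) atTop (𝓝 q₀) := by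
    rw [tendsto_iff_norm_sub_tendsto_zero]
    exact squeeze_zero (fun _ => norm_nonneg _) (fun i => (hqt (ψ i)).le) hδψ
  refine ⟨v₀, hK.mem_proxNormalCone_of_tendsto (fun _ => hqK _) hq₀ (fun _ => hvN _) hqψ hvψ,
    by simpa using hv₀, ?_⟩
  exact le_of_tendsto_of_tendsto' ((hg.tendsto v₀).comp hvψ) hδψ fun i => (hgv (ψ i)).le

theorem exists_unit_mem_proxNormalCone_near {q₀ z : H} {r : ℝ} (hq₀ : q₀ ∈ K)
    (hc : IsCompact (K ∩ closedBall q₀ r)) (hz : z ∉ K) (hzr : ‖z - q₀‖ < r / 2) :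
    ∃ q ∈ K, ‖q - q₀‖ ≤ 2 * ‖z - q₀‖ ∧ ∃ v ∈ proxNormalCone K q, ‖v‖ = 1 := by
  have hq₀S : q₀ ∈ K ∩ closedBall q₀ r :=
    ⟨hq₀, mem_closedBall_self (by linarith [norm_nonneg (z - q₀)])⟩
  obtain ⟨q, ⟨hqK, -⟩, hmin⟩ :=
    hc.exists_isMinOn ⟨q₀, hq₀S⟩ (continuous_const.sub continuous_id).norm.continuousOn
  have hzq : ‖z - q‖ ≤ ‖z - q₀‖ := hmin hq₀S
  have hqq₀ : ‖q - q₀‖ ≤ 2 * ‖z - q₀‖ := by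
    linarith [norm_sub_le_norm_sub_add_norm_sub q z q₀, norm_sub_rev q z]
  have hloc : ∀ w ∈ K, ‖w - q‖ ≤ r - 2 * ‖z - q₀‖ → w ∈ K ∩ closedBall q₀ r := fun w hw hwq =>
    ⟨hw, mem_closedBall_iff_norm.mpr (by linarith [norm_sub_le_norm_sub_add_norm_sub w q q₀])⟩
  have hN := sub_mem_proxNormalCone_of_isMinOn (by linarith) hmin hloc
  have hne : z - q ≠ 0 := sub_ne_zero.mpr fun h => hz (h ▸ hqK)
  exact ⟨q, hqK, hqq₀, ‖z - q‖⁻¹ • (z - q), smul_mem_proxNormalCone (by positivity) hN,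
    norm_smul_inv_norm (𝕜 := ℝ) hne⟩

end ProximalNormal

section Epigraph

variable {F : Type*} [NormedAddCommGroup F]

theorem norm_sq_withLp_prod (p : WithLp 2 (F × ℝ)) : ‖p‖ ^ 2 = ‖p.fst‖ ^ 2 + p.snd ^ 2 := by
  rw [WithLp.prod_norm_sq_eq_of_L2, Real.norm_eq_abs, sq_abs]

variable [InnerProductSpace ℝ F] {f : F → ℝ} {D : Set F}

@[simp] theorem pairLp_fst (x : F) (b : ℝ) : (pairLp x b).fst = x := rfl

@[simp] theorem pairLp_snd (x : F) (b : ℝ) : (pairLp x b).snd = b := rfl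

theorem pairLp_sub_pairLp (x y : F) (b c : ℝ) :
    pairLp x b - pairLp y c = pairLp (x - y) (b - c) := rfl

theorem inner_withLp_prod (p q : WithLp 2 (F × ℝ)) :
    ⟪p, q⟫ = ⟪p.fst, q.fst⟫ + p.snd * q.snd := by
  simp [mul_comm]

theorem mem_epigraphOn {p : WithLp 2 (F × ℝ)} : p ∈ epigraphOn f D ↔ p.fst ∈ D ∧ f p.fst ≤ p.snd :=
  Iff.rfl

theorem pairLp_mem_epigraphOn {x : F} (hx : x ∈ D) : pairLp x (f x) ∈ epigraphOn f D :=
  ⟨hx, le_rfl⟩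

/-- Epigraphs are invariant under upward translation, so their normals point downward. -/
theorem snd_nonpos_of_mem_proxNormalCone_epigraphOn {q v : WithLp 2 (F × ℝ)}
    (hq : q ∈ epigraphOn f D) (hv : v ∈ proxNormalCone (epigraphOn f D) q) : v.snd ≤ 0 := by
  obtain ⟨σ, hσ, h⟩ := hv
  by_contra! hpos
  set τ := v.snd / (σ + 1)
  have hτ : 0 < τ := by positivity
  have hup : q + pairLp 0 τ ∈ epigraphOn f D := by
    rw [mem_epigraphOn] at hq ⊢
    simpa using ⟨hq.1, hq.2.trans (le_add_of_nonneg_right hτ.le)⟩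
  have hineq := h _ hup
  rw [add_sub_cancel_left, inner_withLp_prod, norm_sq_withLp_prod] at hineq
  simp only [pairLp_fst, pairLp_snd, inner_zero_right, norm_zero, zero_add] at hineq
  have hsnd : v.snd = τ * (σ + 1) := (div_mul_cancel₀ _ (by positivity)).symm
  nlinarith

theorem exists_isCompact_epigraphOn_inter_closedBall [FiniteDimensional ℝ F] (hD : IsOpen D)
    (hf : ContinuousOn f D) {x : F} (hx : x ∈ D) (b : ℝ) :
    ∃ r > 0, IsCompact (epigraphOn f D ∩ closedBall (pairLp x b) r) := by
  obtain ⟨r, hr, hrD⟩ := nhds_basis_closedBall.mem_iff.mp (hD.mem_nhds hx)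
  refine ⟨r, hr, ?_⟩
  have hclosed : IsClosed (WithLp.fst ⁻¹' closedBall x r ∩
      (fun p : WithLp 2 (F × ℝ) => (f p.fst, p.snd)) ⁻¹' {c | c.1 ≤ c.2}) :=
    ContinuousOn.preimage_isClosed_of_isClosed
      (((hf.mono hrD).comp (WithLp.continuous_fst 2 F ℝ).continuousOn fun _ hp => hp).prodMk
        (WithLp.continuous_snd 2 F ℝ).continuousOn)
      (isClosed_closedBall.preimage (WithLp.continuous_fst 2 F ℝ))
      (isClosed_le continuous_fst continuous_snd)
  have heq : epigraphOn f D ∩ closedBall (pairLp x b) r = WithLp.fst ⁻¹' closedBall x r ∩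
      (fun p : WithLp 2 (F × ℝ) => (f p.fst, p.snd)) ⁻¹' {c | c.1 ≤ c.2} ∩
        closedBall (pairLp x b) r := by
    refine Set.ext fun p => ⟨?_, ?_⟩
    · rintro ⟨⟨-, hfp⟩, hp⟩
      exact ⟨⟨(WithLp.dist_fst_le p (pairLp x b)).trans hp, hfp⟩, hp⟩
    · rintro ⟨⟨hpx, hfp⟩, hp⟩
      exact ⟨⟨hrD hpx, hfp⟩, hp⟩
  rw [heq]
  exact (isCompact_closedBall (pairLp x b) r).inter_left hclosed

end Epigraph

section NonLipschitz

theorem lipschitzOnWith_of_mul_sub_le {X : Type*} [PseudoMetricSpace X] {f : X → ℝ} {U : Set X}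
    {s M : ℝ} (hs : 0 < s) (h : ∀ x ∈ U, ∀ y ∈ U, s * (f x - f y) ≤ M * dist x y) :
    LipschitzOnWith (M / s).toNNReal f U := by
  refine LipschitzOnWith.of_dist_le_mul fun x hx y hy => ?_
  have hxy := h x hx y hy
  have hyx := h y hy x hx
  rw [dist_comm] at hyx
  have habs : s * |f x - f y| ≤ M * dist x y := by
    rcases abs_cases (f x - f y) with ⟨habs, -⟩ | ⟨habs, -⟩ <;> rw [habs] <;> linarith
  calc dist (f x) (f y) ≤ M / s * dist x y := by
        rwa [Real.dist_eq, div_mul_eq_mul_div, le_div_iff₀ hs, mul_comm |f x - f y| s]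
    _ ≤ (M / s).toNNReal * dist x y := by gcongr; exact Real.le_coe_toNNReal _

variable {X : Type*} [NormedAddCommGroup X] {f : X → ℝ} {x : X}

theorem not_nonLipschitzAt_of_lipschitzOnWith {U : Set X} {L : ℝ≥0} (hU : U ∈ 𝓝 x)
    (hf : LipschitzOnWith L f U) : ¬NonLipschitzAt f x := by
  rintro ⟨xs, ys, hne, hxs, hys, hlim⟩
  have hbound : ∀ᶠ i in atTop,
      ((|f (ys i) - f (xs i)| / ‖ys i - xs i‖ : ℝ) : EReal) ≤ ((L : ℝ) : EReal) := by
    filter_upwards [hxs hU, hys hU] with i hxi hyi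
    have hpos : 0 < ‖ys i - xs i‖ := norm_pos_iff.mpr (sub_ne_zero.mpr (hne i).symm)
    have hdist := hf.dist_le_mul (ys i) hyi (xs i) hxi
    rw [Real.dist_eq, dist_eq_norm] at hdist
    exact_mod_cast (div_le_iff₀ hpos).mpr hdist
  have hle := limsup_le_of_le (by isBoundedDefault) hbound
  rw [hlim, top_le_iff] at hle
  exact EReal.coe_ne_top _ hle

theorem nonLipschitzAt_of_tendsto_slope {ys : ℕ → X} (hne : ∀ i, ys i ≠ x)
    (hys : Tendsto ys atTop (𝓝 x))
    (hslope : Tendsto (fun i => |f (ys i) - f x| / ‖ys i - x‖) atTop atTop) :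
    NonLipschitzAt f x :=
  ⟨fun _ => x, ys, fun i => (hne i).symm, tendsto_const_nhds, hys,
    (EReal.tendsto_coe_nhds_top_iff.mpr hslope).limsup_eq⟩

end NonLipschitz

section SlopeBound

variable {F : Type*} [NormedAddCommGroup F] [InnerProductSpace ℝ F] {f : F → ℝ} {D : Set F}

theorem tendsto_graph_nhdsWithin_epigraphOn (hD : IsOpen D) (hf : ContinuousOn f D) {x : F}
    (hx : x ∈ D) :
    Tendsto (fun y => pairLp y (f y)) (𝓝 x) (𝓝[epigraphOn f D] (pairLp x (f x))) :=
  tendsto_nhdsWithin_iff.mpr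
    ⟨((WithLp.prod_continuous_toLp 2 F ℝ).tendsto _).comp
      (continuousAt_id.prodMk (hf.continuousAt (hD.mem_nhds hx))),
      mem_of_superset (hD.mem_nhds hx) fun _ => pairLp_mem_epigraphOn⟩

theorem exists_slope_bound_of_forall_horizontal_eq_zero [FiniteDimensional ℝ F]
    (hK : HasLocPosReach (epigraphOn f D)) {x : F} (hx : x ∈ D)
    (h : ∀ ζ : F, pairLp ζ 0 ∈ proxNormalCone (epigraphOn f D) (pairLp x (f x)) → ζ = 0) :
    ∃ ε > 0, ∃ s > 0, ∀ q ∈ epigraphOn f D, ‖q - pairLp x (f x)‖ < ε →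
      ∀ v ∈ proxNormalCone (epigraphOn f D) q, s * ‖v‖ ≤ -v.snd := by
  by_contra! hno
  have happrox : ∀ δ > 0, ∃ q ∈ epigraphOn f D, ‖q - pairLp x (f x)‖ < δ ∧
      ∃ v ∈ proxNormalCone (epigraphOn f D) q, ‖v‖ = 1 ∧ |v.snd| < δ := by
    intro δ hδ
    obtain ⟨q, hq, hqx, v, hv, hvδ⟩ := hno δ hδ δ hδ
    have hne : v ≠ 0 := by rintro rfl; simp at hvδ
    refine ⟨q, hq, hqx, ‖v‖⁻¹ • v, smul_mem_proxNormalCone (by positivity) hv,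
      norm_smul_inv_norm (𝕜 := ℝ) hne, ?_⟩
    rw [WithLp.smul_snd, smul_eq_mul, abs_mul, abs_inv, abs_norm,
      abs_of_nonpos (snd_nonpos_of_mem_proxNormalCone_epigraphOn hq hv),
      inv_mul_lt_iff₀ (norm_pos_iff.mpr hne)]
    linarith
  obtain ⟨u, hu, hu1, husnd⟩ := hK.exists_unit_mem_proxNormalCone (pairLp_mem_epigraphOn hx)
    (WithLp.continuous_snd 2 F ℝ).abs happrox
  have hpair : pairLp u.fst 0 = u := by rw [← abs_nonpos_iff.mp husnd]; rfl
  have hu0 : u = 0 := by rw [← hpair, h u.fst (hpair ▸ hu)]; rfl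
  simp [hu0] at hu1

theorem exists_unit_proxNormal_snd_le_of_slope_bound [FiniteDimensional ℝ F]
    (hK : HasLocPosReach (epigraphOn f D)) (hD : IsOpen D) (hf : ContinuousOn f D) {x : F}
    (hx : x ∈ D) {ρ s : ℝ} (hρ : 0 < ρ)
    (hslope : ∀ q ∈ epigraphOn f D, ‖q - pairLp x (f x)‖ < ρ →
      ∀ v ∈ proxNormalCone (epigraphOn f D) q, s * ‖v‖ ≤ -v.snd) :
    ∃ u ∈ proxNormalCone (epigraphOn f D) (pairLp x (f x)), ‖u‖ = 1 ∧ u.snd ≤ -s := by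
  obtain ⟨r, hr, hc⟩ := exists_isCompact_epigraphOn_inter_closedBall hD hf hx (f x)
  have happrox : ∀ δ > 0, ∃ q ∈ epigraphOn f D, ‖q - pairLp x (f x)‖ < δ ∧
      ∃ v ∈ proxNormalCone (epigraphOn f D) q, ‖v‖ = 1 ∧ v.snd + s < δ := by
    intro δ hδ
    obtain ⟨t, ht, htδ, htρ, htr⟩ : ∃ t > 0, 2 * t < δ ∧ 2 * t < ρ ∧ t < r / 2 :=
      ⟨min δ (min ρ r) / 3, by positivity, by linarith [min_le_left δ (min ρ r)],
        by linarith [min_le_left ρ r, min_le_right δ (min ρ r)],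
        by linarith [min_le_right ρ r, min_le_right δ (min ρ r)]⟩
    have hz : pairLp x (f x - t) ∉ epigraphOn f D := fun hz => by
      have hle := (mem_epigraphOn.mp hz).2
      simp only [pairLp_fst, pairLp_snd] at hle
      linarith
    have hzP : ‖pairLp x (f x - t) - pairLp x (f x)‖ = t := by
      rw [pairLp_sub_pairLp, ← sq_eq_sq₀ (norm_nonneg _) ht.le, norm_sq_withLp_prod]
      simp
    obtain ⟨q, hq, hqP, v, hv, hv1⟩ :=
      exists_unit_mem_proxNormalCone_near (pairLp_mem_epigraphOn hx) hc hz (by rwa [hzP])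
    rw [hzP] at hqP
    have hvs := hslope q hq (by linarith) v hv
    rw [hv1, mul_one] at hvs
    exact ⟨q, hq, by linarith, v, hv, hv1, by linarith⟩
  obtain ⟨u, hu, hu1, hus⟩ := hK.exists_unit_mem_proxNormalCone (pairLp_mem_epigraphOn hx)
    (g := fun v => v.snd + s) ((WithLp.continuous_snd 2 F ℝ).add continuous_const) happrox
  exact ⟨u, hu, hu1, by linarith⟩

/-- For `t = f x - f y > 0`, `h` gives `s t - ‖x - y‖ ≤ c (‖x - y‖² + t²)`, and the two smallness
assumptions absorb the right-hand side. -/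
theorem mul_sub_le_of_unit_proxNormal {x y : F} {u : WithLp 2 (F × ℝ)} {s c : ℝ} (hs : 0 ≤ s)
    (hu : ‖u‖ = 1) (hus : u.snd ≤ -s)
    (h : ⟪u, pairLp y (f y) - pairLp x (f x)⟫ ≤ c * ‖pairLp y (f y) - pairLp x (f x)‖ ^ 2)
    (hcd : c * ‖x - y‖ ≤ 1) (hct : c * |f x - f y| ≤ s / 2) :
    s * (f x - f y) ≤ 4 * ‖x - y‖ := by
  rcases le_or_gt (f x - f y) 0 with hle | hpos
  · nlinarith [norm_nonneg (x - y)]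
  rw [pairLp_sub_pairLp, inner_withLp_prod, norm_sq_withLp_prod] at h
  simp only [pairLp_fst, pairLp_snd] at h
  rw [norm_sub_rev y x] at h
  rw [abs_of_pos hpos] at hct
  have hfst : -‖x - y‖ ≤ ⟪u.fst, y - x⟫ := by
    have hu₁ : ‖u.fst‖ ≤ 1 := hu ▸ WithLp.norm_fst_le _ u
    have hcs := abs_real_inner_le_norm u.fst (y - x)
    rw [norm_sub_rev] at hcs
    nlinarith [neg_abs_le ⟪u.fst, y - x⟫, norm_nonneg (x - y)]
  nlinarith [mul_le_mul_of_nonneg_right hcd (norm_nonneg (x - y)),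
    mul_le_mul_of_nonneg_right hct hpos.le, mul_le_mul_of_nonneg_right hus hpos.le]

theorem exists_lipschitzOnWith_of_slope_bound [FiniteDimensional ℝ F]
    (hK : HasLocPosReach (epigraphOn f D)) (hD : IsOpen D) (hf : ContinuousOn f D) {x : F}
    (hx : x ∈ D) {ε s : ℝ} (hε : 0 < ε) (hs : 0 < s)
    (hslope : ∀ q ∈ epigraphOn f D, ‖q - pairLp x (f x)‖ < ε →
      ∀ v ∈ proxNormalCone (epigraphOn f D) q, s * ‖v‖ ≤ -v.snd) :
    ∃ U ∈ 𝓝 x, ∃ L : ℝ≥0, LipschitzOnWith L f U := by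
  obtain ⟨φ, hφc, hφ0, hN⟩ := id hK
  set P := pairLp x (f x)
  have hP : P ∈ epigraphOn f D := pairLp_mem_epigraphOn hx
  set Φ := φ P + 1
  have hΦ : 0 < Φ := by linarith [hφ0 P hP]
  have hgraphK := tendsto_graph_nhdsWithin_epigraphOn hD hf hx
  have hgraph := hgraphK.mono_right nhdsWithin_le_nhds
  have hnear : ∀ᶠ y in 𝓝 x, y ∈ D ∧ ‖pairLp y (f y) - P‖ < ε / 2 ∧
      φ (pairLp y (f y)) < Φ ∧ |f y - f x| < s / (4 * Φ) ∧ ‖y - x‖ < 1 / (2 * Φ) := by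
    refine Filter.Eventually.and (hD.mem_nhds hx) <| .and ?_ <| .and ?_ <| .and ?_ ?_
    · simpa only [dist_eq_norm] using Metric.tendsto_nhds.mp hgraph _ (half_pos hε)
    · exact hgraphK.eventually ((hφc P hP).tendsto.eventually (gt_mem_nhds (lt_add_one _)))
    · simpa only [Real.dist_eq] using Metric.tendsto_nhds.mp
        (hf.continuousAt (hD.mem_nhds hx)) _ (by positivity)
    · exact eventually_norm_sub_lt x (by positivity)
  refine ⟨_, hnear, _, lipschitzOnWith_of_mul_sub_le (M := 4) hs fun y₁ h₁ y₂ h₂ => ?_⟩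
  rw [dist_eq_norm]
  obtain ⟨hy₁D, hy₁P, hφy₁, hfy₁, hy₁x⟩ := h₁
  obtain ⟨hy₂D, -, -, hfy₂, hy₂x⟩ := h₂
  have hQ := pairLp_mem_epigraphOn (f := f) hy₁D
  obtain ⟨u, hu, hu1, hus⟩ := exists_unit_proxNormal_snd_le_of_slope_bound hK hD hf hy₁D
    (half_pos hε) fun q hq hqQ => hslope q hq <| by
      linarith [norm_sub_le_norm_sub_add_norm_sub q (pairLp y₁ (f y₁)) P]
  refine mul_sub_le_of_unit_proxNormal (c := Φ) hs.le hu1 hus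
    ((hN _ hQ u hu _ (pairLp_mem_epigraphOn hy₂D)).trans ?_) ?_ ?_
  · rw [hu1, mul_one]
    gcongr
  · rw [lt_div_iff₀' (by positivity)] at hy₁x hy₂x
    nlinarith [mul_le_mul_of_nonneg_left (norm_sub_le_norm_sub_add_norm_sub y₁ x y₂) hΦ.le,
      norm_sub_rev x y₂]
  · rw [lt_div_iff₀' (by positivity)] at hfy₁ hfy₂
    nlinarith [mul_le_mul_of_nonneg_left (abs_sub_le (f y₁) (f x) (f y₂)) hΦ.le,
      abs_sub_comm (f x) (f y₂)]

end SlopeBound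

theorem nonLipschitzAt_of_pairLp_mem_proxNormalCone {F : Type*} [NormedAddCommGroup F]
    [InnerProductSpace ℝ F] {f : F → ℝ} {D : Set F} (hD : IsOpen D) {x ζ : F} (hx : x ∈ D)
    (hζ : ζ ≠ 0) (h : pairLp ζ 0 ∈ proxNormalCone (epigraphOn f D) (pairLp x (f x))) :
    NonLipschitzAt f x := by
  obtain ⟨σ, hσ, hN⟩ := h
  obtain ⟨δ, hδ, hball⟩ := Metric.isOpen_iff.mp hD x hx
  have hζpos : 0 < ‖ζ‖ := norm_pos_iff.mpr hζ
  set u := ‖ζ‖⁻¹ • ζ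
  have hu : ‖u‖ = 1 := norm_smul_inv_norm (𝕜 := ℝ) hζ
  have hζu : ⟪ζ, u⟫ = ‖ζ‖ := by
    rw [real_inner_smul_right, real_inner_self_eq_norm_mul_norm, ← mul_assoc,
      inv_mul_cancel₀ hζpos.ne', one_mul]
  set c := min (δ / 2) (‖ζ‖ / (σ + 1))
  have hc : 0 < c := by positivity
  set t : ℕ → ℝ := fun i => c / ((i : ℝ) ^ 2 + 1)
  have ht : ∀ i, 0 < t i := fun i => by positivity
  set ys : ℕ → F := fun i => x + t i • u
  have hys : ∀ i, ‖ys i - x‖ = t i := fun i => by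
    rw [add_sub_cancel_left, norm_smul, hu, mul_one, Real.norm_of_nonneg (ht i).le]
  have hysD : ∀ i, ys i ∈ D := fun i => hball <| mem_ball_iff_norm.mpr <| by
    rw [hys]
    linarith [div_le_self hc.le (by nlinarith : (1 : ℝ) ≤ (i : ℝ) ^ 2 + 1),
      min_le_left (δ / 2) (‖ζ‖ / (σ + 1))]
  have hslope : ∀ i : ℕ, (i : ℝ) ≤ |f (ys i) - f x| / ‖ys i - x‖ := fun i => by
    have key := hN _ (pairLp_mem_epigraphOn (hysD i))
    rw [pairLp_sub_pairLp, inner_withLp_prod, norm_sq_withLp_prod] at key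
    simp only [pairLp_fst, pairLp_snd, zero_mul, add_zero, hys] at key
    rw [add_sub_cancel_left, real_inner_smul_right, hζu] at key
    have htc : (σ + 1) * (t i * ((i : ℝ) ^ 2 + 1)) ≤ ‖ζ‖ := by
      rw [div_mul_cancel₀ _ (by positivity), ← le_div_iff₀' (by positivity)]
      exact min_le_right _ _
    have hsq : (i * t i) ^ 2 ≤ (f (ys i) - f x) ^ 2 := by
      nlinarith [mul_le_mul_of_nonneg_left htc (ht i).le, ht i, sq_nonneg (f (ys i) - f x)]
    rw [hys, le_div_iff₀ (ht i)]
    exact (le_abs_self _).trans (sq_le_sq.mp hsq)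
  refine nonLipschitzAt_of_tendsto_slope (ys := ys) (fun i hi => ?_) ?_
    (tendsto_atTop_mono hslope tendsto_natCast_atTop_atTop)
  · have := hys i
    rw [hi, sub_self, norm_zero] at this
    exact (ht i).ne this
  · rw [tendsto_iff_norm_sub_tendsto_zero]
    simp only [hys]
    exact tendsto_const_nhds.div_atTop <| tendsto_atTop_add_const_right _ 1 <|
      (tendsto_pow_atTop two_ne_zero).comp tendsto_natCast_atTop_atTop

/-- Proposition 3.2. Let `Ω ⊆ ℝ^N` be open and `T : Ω → ℝ` continuous with
`epi(T)` of locally positive reach. Then `T` is non-Lipschitz at `x̄ ∈ Ω` iff there is a nonzero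
`ζ` with `(ζ, 0)` in the proximal normal cone to `epi(T)` at `(x̄, T x̄)`. -/
theorem nonLipschitz_iff_horizontal_proximal_normal
    {N : ℕ} (Ω : Set (Euc N)) (hΩ : IsOpen Ω)
    (T : Euc N → ℝ) (hTcont : ContinuousOn T Ω)
    (hepi : HasLocPosReach (epigraphOn T Ω))
    (xbar : Euc N) (hx : xbar ∈ Ω) :
    NonLipschitzAt T xbar ↔
      ∃ ζ : Euc N, ζ ≠ 0 ∧
        pairLp ζ 0 ∈ proxNormalCone (epigraphOn T Ω) (pairLp xbar (T xbar)) := by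
  refine ⟨fun hNL => ?_,
    fun ⟨ζ, hζ, hN⟩ => nonLipschitzAt_of_pairLp_mem_proxNormalCone hΩ hx hζ hN⟩
  by_contra! hno
  obtain ⟨ε, hε, s, hs, hslope⟩ := exists_slope_bound_of_forall_horizontal_eq_zero hepi hx
    fun ζ hζ => by_contra fun hζ0 => hno ζ hζ0 hζ
  obtain ⟨U, hU, L, hL⟩ := exists_lipschitzOnWith_of_slope_bound hepi hΩ hTcont hx hε hs hslope
  exact not_nonLipschitzAt_of_lipschitzOnWith hU hL hNL
end
end

section
/- Let A be a real N×N matrix and b ∈ ℝ^N with rank[b, Ab, …, A^{N−1}b] = N. Then for every nonzero ζ ∈ ℝ^N the switching function g(t) = ⟨ζ, e^{−At} b⟩ is not identically zero on any nondegenerate interval, and g has at most finitely many zeros in every compact interval [0, r]. -/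
open scoped RealInnerProductSpace ENNReal NNReal
open MeasureTheory Filter

noncomputable section

/-- The matrix exponential `e^{tA}` acting on `ℝ^N`. -/
def expA {N : ℕ} (A : Matrix (Fin N) (Fin N) ℝ) (t : ℝ) : Euc N →ₗ[ℝ] Euc N :=
  Matrix.toEuclideanLin (NormedSpace.exp (t • A))

/-- Normality of the linear system `ẋ = Ax + Bu`: for every column `b i` of `B`,
`rank [b i, A (b i), …, A^{N-1} (b i)] = N`. -/
def IsNormalPair {N M : ℕ} (A : Matrix (Fin N) (Fin N) ℝ) (b : Fin M → Euc N) : Prop :=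
  ∀ i, Submodule.span ℝ
    (Set.range fun k : Fin N => Matrix.toEuclideanLin (A ^ (k : ℕ)) (b i)) = ⊤

/-- Admissible controls: measurable with values in `[-1,1]^M`. -/
def IsAdmissible {M : ℕ} (u : ℝ → Fin M → ℝ) : Prop :=
  Measurable u ∧ ∀ t i, u t i ∈ Set.Icc (-1 : ℝ) 1

/-- The trajectory of `ẏ = Ay + Bu`, `y 0 = x`:
`y t = e^{At} x + ∫₀ᵗ e^{A(t-s)} B u s ds`. -/
def linTraj {N M : ℕ} (A : Matrix (Fin N) (Fin N) ℝ) (b : Fin M → Euc N)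
    (x : Euc N) (u : ℝ → Fin M → ℝ) (t : ℝ) : Euc N :=
  expA A t x + ∫ s in (0:ℝ)..t, expA A (t - s) (∑ i, u s i • b i)

/-- The minimum time to reach the origin from `x` for the linear system. -/
def minTime {N M : ℕ} (A : Matrix (Fin N) (Fin N) ℝ) (b : Fin M → Euc N) (x : Euc N) : ℝ :=
  sInf {t : ℝ | 0 ≤ t ∧ ∃ u, IsAdmissible u ∧ linTraj A b x u t = 0}

/-- The reachable set `R_t = {x : T x ≤ t}`. -/
def Rset {N M : ℕ} (A : Matrix (Fin N) (Fin N) ℝ) (b : Fin M → Euc N) (t : ℝ) : Set (Euc N) :=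
  {x | minTime A b x ≤ t}

/-- The minimized Hamiltonian `h(x,ζ) = ⟪ζ, Ax⟫ - ∑ᵢ |⟪ζ, bᵢ⟫|` of the linear system. -/
def hLin {N M : ℕ} (A : Matrix (Fin N) (Fin N) ℝ) (b : Fin M → Euc N) (x ζ : Euc N) : ℝ :=
  ⟪ζ, Matrix.toEuclideanLin A x⟫ - ∑ i, |⟪ζ, b i⟫|

/-- The set `S` of formula (4.4): points of the form
`x = ∑ᵢ ∫₀ʳ e^{A(t-r)} bᵢ sign ⟪ζ, e^{At} bᵢ⟫ dt` for some `r > 0` and a unit `ζ`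
orthogonal to every `bᵢ`. -/
def Sset {N M : ℕ} (A : Matrix (Fin N) (Fin N) ℝ) (b : Fin M → Euc N) : Set (Euc N) :=
  {x | ∃ r : ℝ, 0 < r ∧ ∃ ζ : Euc N, ‖ζ‖ = 1 ∧
    (x = ∑ i, ∫ t in (0:ℝ)..r, Real.sign ⟪ζ, expA A t (b i)⟫ • expA A (t - r) (b i)) ∧
    ∀ i, ⟪ζ, b i⟫ = 0}

/-!
The switching function `g t = ⟪ζ, e^{-At} b⟫` is real analytic. If it vanished identically, then
so would `t ↦ ⟪ζ, e^{tA} b⟫`, and differentiating `n` times at `0` gives `⟪ζ, Aⁿ b⟫ = 0` for all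
`n`; since the vectors `Aᵏ b` span `ℝ^N`, this forces `ζ = 0`. Hence `g` is a nonzero analytic
function on the connected line, so its zeros are isolated and meet every compact set in a finite
set; a nondegenerate interval, being infinite, therefore contains a point where `g ≠ 0`.
-/

open NormedSpace

theorem eq_zero_of_forall_inner_eq_zero_of_span_eq_top {𝕜 E : Type*} [RCLike 𝕜]
    [NormedAddCommGroup E] [InnerProductSpace 𝕜 E] {s : Set E}
    (hs : Submodule.span 𝕜 s = ⊤) {v : E} (hv : ∀ u ∈ s, inner 𝕜 v u = 0) : v = 0 := by
  have hspan : Submodule.span 𝕜 s ≤ (𝕜 ∙ v)ᗮ := Submodule.span_le.2 fun u hu =>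
    Submodule.mem_orthogonal_singleton_iff_inner_right.2 (hv u hu)
  rw [hs, top_le_iff, Submodule.orthogonal_eq_top_iff] at hspan
  exact Submodule.span_singleton_eq_bot.1 hspan

theorem AnalyticOnNhd.finite_setOf_eq_zero_of_isCompact {𝕜 E : Type*} [NontriviallyNormedField 𝕜]
    [NormedAddCommGroup E] [NormedSpace 𝕜 E] {f : 𝕜 → E} {U K : Set 𝕜}
    (hf : AnalyticOnNhd 𝕜 f U) (hU : IsPreconnected U) (hf₀ : ¬Set.EqOn f 0 U)
    (hK : IsCompact K) (hKU : K ⊆ U) : {z ∈ K | f z = 0}.Finite := by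
  have hne : ∀ᶠ z in codiscreteWithin U, f z ≠ 0 :=
    (hf.eqOn_zero_or_eventually_ne_zero_of_preconnected hU).resolve_left hf₀
  exact (hK.finite_sdiff_of_mem_codiscreteWithin (codiscreteWithin_mono hKU hne)).subset
    fun z ⟨hzK, hz⟩ => ⟨hzK, not_not_intro hz⟩

section ExpSmul

variable {𝕂 𝔸 F : Type*} [RCLike 𝕂] [NormedRing 𝔸] [NormedAlgebra 𝕂 𝔸] [CompleteSpace 𝔸]
  [NormedAddCommGroup F] [NormedSpace 𝕂 F]

theorem ContinuousLinearMap.hasDerivAt_exp_smul_const_mul_pow (φ : 𝔸 →L[𝕂] F) (x : 𝔸)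
    (n : ℕ) (t : 𝕂) :
    HasDerivAt (fun u : 𝕂 => φ (exp (u • x) * x ^ n)) (φ (exp (t • x) * x ^ (n + 1))) t := by
  simpa only [Function.comp_def, mul_assoc, ← pow_succ'] using
    φ.hasFDerivAt.comp_hasDerivAt t ((hasDerivAt_exp_smul_const x t).mul_const (x ^ n))

theorem ContinuousLinearMap.map_pow_eq_zero_of_map_exp_smul_eq_zero (φ : 𝔸 →L[𝕂] F) {x : 𝔸}
    (h : ∀ t : 𝕂, φ (exp (t • x)) = 0) (n : ℕ) : φ (x ^ n) = 0 := by
  suffices ∀ t : 𝕂, φ (exp (t • x) * x ^ n) = 0 by simpa using this 0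
  induction n with
  | zero => simpa using h
  | succ n ih =>
    intro t
    have hzero : (fun u : 𝕂 => φ (exp (u • x) * x ^ n)) = fun _ => 0 := funext ih
    simpa [hzero] using ((φ.hasDerivAt_exp_smul_const_mul_pow x n t).deriv).symm

end ExpSmul

section Matrix

-- Any norm would do: all of them induce the product topology, in which `expA` is defined.
attribute [local instance] Matrix.linftyOpNormedAddCommGroup Matrix.linftyOpNormedRing
  Matrix.linftyOpNormedAlgebra

variable {N : ℕ} (A : Matrix (Fin N) (Fin N) ℝ) (b ζ : Euc N)

def innerToEuclideanLinApplyCLM : Matrix (Fin N) (Fin N) ℝ →L[ℝ] ℝ :=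
  LinearMap.toContinuousLinearMap
    (innerₛₗ ℝ ζ ∘ₗ LinearMap.applyₗ b ∘ₗ Matrix.toEuclideanLin.toLinearMap)

theorem analyticOnNhd_inner_expA : AnalyticOnNhd ℝ (fun t => ⟪ζ, expA A t b⟫) Set.univ := by
  have : CompleteSpace (Matrix (Fin N) (Fin N) ℝ) := FiniteDimensional.complete ℝ _
  intro t _
  exact (innerToEuclideanLinApplyCLM b ζ).analyticAt _ |>.comp <|
    (exp_analytic _).comp ((ContinuousLinearMap.smulRight (.id ℝ ℝ) A).analyticAt t)

theorem inner_toEuclideanLin_pow_eq_zero_of_inner_expA_eq_zero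
    (h : ∀ t, ⟪ζ, expA A t b⟫ = 0) (k : ℕ) : ⟪ζ, Matrix.toEuclideanLin (A ^ k) b⟫ = 0 := by
  have : CompleteSpace (Matrix (Fin N) (Fin N) ℝ) := FiniteDimensional.complete ℝ _
  exact (innerToEuclideanLinApplyCLM b ζ).map_pow_eq_zero_of_map_exp_smul_eq_zero h k

end Matrix

/-- If `rank [b, Ab, …, A^{N-1} b] = N`, then for every `ζ ≠ 0` the switching
function `g t = ⟪ζ, e^{-At} b⟫` is not identically zero on any nondegenerate interval, and it has
at most finitely many zeros in every compact interval `[0, r]`. -/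
theorem switching_function_not_identically_zero_and_finitely_many_zeros
    {N : ℕ} (A : Matrix (Fin N) (Fin N) ℝ) (b : Euc N)
    (hK : Submodule.span ℝ
      (Set.range fun k : Fin N => Matrix.toEuclideanLin (A ^ (k : ℕ)) b) = ⊤)
    (ζ : Euc N) (hζ : ζ ≠ 0) :
    (∀ a c : ℝ, a < c → ∃ t ∈ Set.Icc a c, ⟪ζ, expA A (-t) b⟫ ≠ 0) ∧
    (∀ r : ℝ, {t ∈ Set.Icc (0:ℝ) r | ⟪ζ, expA A (-t) b⟫ = 0}.Finite) := by
  set g : ℝ → ℝ := fun t => ⟪ζ, expA A (-t) b⟫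
  have hg : AnalyticOnNhd ℝ g Set.univ :=
    (analyticOnNhd_inner_expA A b ζ).comp (fun _ _ => analyticAt_id.neg) (Set.mapsTo_univ _ _)
  have hg₀ : ¬Set.EqOn g 0 Set.univ := by
    intro hzero
    refine hζ (eq_zero_of_forall_inner_eq_zero_of_span_eq_top hK ?_)
    rintro _ ⟨k, rfl⟩
    refine inner_toEuclideanLin_pow_eq_zero_of_inner_expA_eq_zero A b ζ (fun t => ?_) k
    simpa [g] using hzero (Set.mem_univ (-t))
  have hfin : ∀ a c : ℝ, {t ∈ Set.Icc a c | g t = 0}.Finite := fun a c =>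
    hg.finite_setOf_eq_zero_of_isCompact isPreconnected_univ hg₀ isCompact_Icc
      (Set.subset_univ _)
  refine ⟨fun a c hac => ?_, fun r => hfin 0 r⟩
  by_contra! hall
  exact Set.Icc_infinite hac ((hfin a c).subset fun t ht => ⟨ht, hall t ht⟩)
end
end

section
/- Let A be a real N×N matrix and b ∈ ℝ^N with rank[b, Ab, …, A^{N−1}b] = N. Then there exists τ̃ > 0, depending only on A, b, N, such that for every 1 ≤ j ≤ N and all times 0 ≤ s_1 < s_2 < … < s_j ≤ τ̃, the vectors e^{−As_1}b, e^{−As_2}b, …, e^{−As_j}b are linearly independent. -/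
open scoped RealInnerProductSpace ENNReal NNReal
open MeasureTheory Filter

noncomputable section

/-! By Rolle's theorem, if `t ↦ ⟪ζ, e^{tA} b⟫` vanishes at `N` points of an interval, then each
derivative `t ↦ ⟪ζ, A ^ m e^{tA} b⟫` with `m < N` vanishes somewhere in that interval. The
Kalman condition gives, for every `ζ ≠ 0`, some `m < N` with `⟪ζ, A ^ m b⟫ ≠ 0`, and by continuity
(uniformly in `ζ`, since an injective linear map on a finite-dimensional space is anti-Lipschitz)
this derivative has no zero on a fixed small interval `[-τ, τ]`. Hence no `ζ ≠ 0` is orthogonal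
to `N` distinct vectors `e^{-As} b` with `s ∈ [0, τ]`: these vectors are linearly independent,
and so is any smaller family, after padding it with further times. -/

open NormedSpace Set

section Rolle

variable {a b : ℝ}

theorem exists_hasDerivAt_eq_zero_of_ncard_eq_succ {f f' : ℝ → ℝ}
    (hf : ∀ t ∈ Icc a b, HasDerivAt f (f' t) t) {T : Set ℝ} {k : ℕ} (hT : T ⊆ Icc a b)
    (hcard : T.ncard = k + 1) (hzero : ∀ t ∈ T, f t = 0) :
    ∃ T' ⊆ Icc a b, T'.ncard = k ∧ ∀ t ∈ T', f' t = 0 := by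
  have hfin : T.Finite := finite_of_ncard_ne_zero (by omega)
  let e := hfin.toFinset.orderEmbOfFin (by rw [← ncard_eq_toFinset_card T hfin, hcard])
  have heT : ∀ i, e i ∈ T := fun i => hfin.mem_toFinset.1 (Finset.orderEmbOfFin_mem _ _ i)
  have he : ∀ i, e i ∈ Icc a b := fun i => hT (heT i)
  have hrolle : ∀ i : Fin k, ∃ c ∈ Ioo (e i.castSucc) (e i.succ), f' c = 0 := fun i => by
    have hsub : Icc (e i.castSucc) (e i.succ) ⊆ Icc a b := Icc_subset_Icc (he _).1 (he _).2
    exact exists_hasDerivAt_eq_zero (e.strictMono Fin.castSucc_lt_succ)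
      (fun t ht => (hf t (hsub ht)).continuousAt.continuousWithinAt)
      ((hzero _ (heT _)).trans (hzero _ (heT _)).symm) (fun t ht => hf t (hsub (Ioo_subset_Icc_self ht)))
  choose c hc hc0 using hrolle
  have hmono : StrictMono c := fun i j hij =>
    calc c i < e i.succ := (hc i).2
      _ ≤ e j.castSucc := e.monotone (Fin.succ_le_castSucc_iff.2 hij)
      _ < c j := (hc j).1
  refine ⟨range c, ?_, ?_, forall_mem_range.2 hc0⟩
  · rintro _ ⟨i, rfl⟩
    exact ⟨(he _).1.trans (hc i).1.le, (hc i).2.le.trans (he _).2⟩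
  · rw [ncard_range_of_injective hmono.injective, Nat.card_eq_fintype_card, Fintype.card_fin]

theorem exists_mem_Icc_eq_zero_of_lt_ncard {F : ℕ → ℝ → ℝ}
    (hF : ∀ m, ∀ t ∈ Icc a b, HasDerivAt (F m) (F (m + 1) t) t) {T : Set ℝ} (hT : T ⊆ Icc a b)
    (hzero : ∀ t ∈ T, F 0 t = 0) {m : ℕ} (hm : m < T.ncard) : ∃ t ∈ Icc a b, F m t = 0 := by
  have hzeros : ∀ m ≤ T.ncard, ∃ T' ⊆ Icc a b, T'.ncard + m = T.ncard ∧ ∀ t ∈ T', F m t = 0 := by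
    intro m
    induction m with
    | zero => exact fun _ => ⟨T, hT, rfl, hzero⟩
    | succ m ih =>
      intro hm
      obtain ⟨T', hT', hcard, hzero'⟩ := ih (by omega)
      obtain ⟨T'', hT'', hcard', hzero''⟩ := exists_hasDerivAt_eq_zero_of_ncard_eq_succ (hF m) hT'
        (k := T.ncard - (m + 1)) (by omega) hzero'
      exact ⟨T'', hT'', by omega, hzero''⟩
  obtain ⟨T', hT', hcard, hzero'⟩ := hzeros m hm.le
  obtain ⟨t, ht⟩ := nonempty_of_ncard_ne_zero (s := T') (by omega)
  exact ⟨t, hT' ht, hzero' t ht⟩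

end Rolle

section InnerProductSpace

variable {E : Type*} [NormedAddCommGroup E] [InnerProductSpace ℝ E] [FiniteDimensional ℝ E]

theorem exists_ne_zero_forall_inner_eq_zero_of_not_linearIndependent {ι : Type*} [Finite ι]
    {v : ι → E} (hcard : Nat.card ι = Module.finrank ℝ E) (hv : ¬LinearIndependent ℝ v) :
    ∃ ζ ≠ 0, ∀ i, ⟪ζ, v i⟫ = 0 := by
  have := Fintype.ofFinite ι
  have hspan : Submodule.span ℝ (range v) ≠ ⊤ := fun h =>
    hv (linearIndependent_of_top_le_span_of_card_eq_finrank h.ge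
      (by rwa [← Nat.card_eq_fintype_card]))
  obtain ⟨ζ, hζ, hζ0⟩ := (Submodule.ne_bot_iff _).1 (mt Submodule.orthogonal_eq_bot_iff.1 hspan)
  exact ⟨ζ, hζ0, fun i => Submodule.inner_left_of_mem_orthogonal
    (Submodule.subset_span (mem_range_self i)) hζ⟩

theorem exists_pos_forall_ne_zero_exists_norm_le_mul_abs_inner {n : ℕ} {v : Fin n → E}
    (hv : Submodule.span ℝ (range v) = ⊤) :
    ∃ K > 0, ∀ ζ ≠ (0 : E), ∃ m, ‖ζ‖ ≤ K * |⟪v m, ζ⟫| := by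
  let L : E →ₗ[ℝ] Fin n → ℝ := LinearMap.pi fun m => (innerSL ℝ (v m)).toLinearMap
  have hL : Function.Injective L := by
    refine (injective_iff_map_eq_zero L).2 fun ζ hζ => inner_self_eq_zero (𝕜 := ℝ) |>.1 ?_
    have : innerₛₗ ℝ ζ = 0 := LinearMap.ext_on_range hv fun m => by
      show ⟪ζ, v m⟫ = 0
      rw [real_inner_comm]
      exact congrFun hζ m
    exact LinearMap.congr_fun this ζ
  obtain ⟨K, hK0, hK⟩ := L.exists_antilipschitzWith (LinearMap.ker_eq_bot.2 hL)
  refine ⟨K, hK0, fun ζ hζ => ?_⟩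
  obtain ⟨m₀, -⟩ := Function.ne_iff.1 ((map_ne_zero_iff L hL).2 hζ)
  obtain ⟨m, -, hm⟩ := Finset.univ.exists_max_image (fun m => |⟪v m, ζ⟫|) ⟨m₀, Finset.mem_univ _⟩
  refine ⟨m, (ZeroHomClass.bound_of_antilipschitz L hK ζ).trans ?_⟩
  gcongr
  exact (pi_norm_le_iff_of_nonneg (abs_nonneg _)).2 fun m' => hm m' (Finset.mem_univ _)

theorem exists_pos_forall_ne_zero_exists_forall_inner_ne_zero {n : ℕ} {F : Fin n → ℝ → E}
    (hF : ∀ m, ContinuousAt (F m) 0) (hspan : Submodule.span ℝ (range fun m => F m 0) = ⊤) :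
    ∃ τ > 0, ∀ ζ ≠ (0 : E), ∃ m, ∀ t ∈ Icc (-τ) τ, ⟪ζ, F m t⟫ ≠ 0 := by
  obtain ⟨K, hK0, hK⟩ := exists_pos_forall_ne_zero_exists_norm_le_mul_abs_inner hspan
  obtain ⟨δ, hδ, hδF⟩ := Metric.continuousAt_iff.1 (continuousAt_pi.2 hF) K⁻¹ (inv_pos.2 hK0)
  refine ⟨δ / 2, half_pos hδ, fun ζ hζ => ?_⟩
  obtain ⟨m, hm⟩ := hK ζ hζ
  refine ⟨m, fun t ht h0 => ?_⟩
  have hclose : ‖F m t - F m 0‖ < K⁻¹ := by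
    rw [← dist_eq_norm]
    refine (dist_le_pi_dist (fun m => F m t) (fun m => F m 0) m).trans_lt (hδF ?_)
    rw [Real.dist_eq, sub_zero]
    exact (abs_le.2 ht).trans_lt (half_lt_self hδ)
  have hsmall : |⟪F m 0, ζ⟫| ≤ ‖F m t - F m 0‖ * ‖ζ‖ := by
    rw [← abs_neg, ← zero_sub, ← h0, real_inner_comm, ← inner_sub_left]
    exact abs_real_inner_le_norm _ _
  have hζpos : 0 < ‖ζ‖ := norm_pos_iff.2 hζ
  have : ‖ζ‖ < ‖ζ‖ :=
    calc ‖ζ‖ ≤ K * (‖F m t - F m 0‖ * ‖ζ‖) := hm.trans (by gcongr)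
      _ < K * (K⁻¹ * ‖ζ‖) := by gcongr
      _ = ‖ζ‖ := by field_simp
  exact this.false

end InnerProductSpace

section MatrixExp

attribute [local instance] Matrix.linftyOpNormedRing Matrix.linftyOpNormedAlgebra

variable {N : ℕ} (A : Matrix (Fin N) (Fin N) ℝ) (b : Euc N)

def powMulExpApply (m : ℕ) (t : ℝ) : Euc N :=
  Matrix.toEuclideanLin (A ^ m * exp (t • A)) b

theorem hasDerivAt_powMulExpApply (m : ℕ) (t : ℝ) :
    HasDerivAt (powMulExpApply A b m) (powMulExpApply A b (m + 1) t) t := by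
  let apply_b : Matrix (Fin N) (Fin N) ℝ →L[ℝ] Euc N :=
    (LinearMap.applyₗ b ∘ₗ Matrix.toEuclideanLin.toLinearMap).toContinuousLinearMap
  have h := (hasDerivAt_exp_smul_const' A t).const_mul (A ^ m)
  rw [← mul_assoc, ← pow_succ] at h
  exact apply_b.hasFDerivAt.comp_hasDerivAt t h

theorem powMulExpApply_zero_left (t : ℝ) : powMulExpApply A b 0 t = expA A t b := by
  rw [powMulExpApply, pow_zero, one_mul, expA]

theorem powMulExpApply_zero_right (m : ℕ) :
    powMulExpApply A b m 0 = Matrix.toEuclideanLin (A ^ m) b := by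
  rw [powMulExpApply, zero_smul, exp_zero, mul_one]

theorem linearIndepOn_expA_apply_of_ncard_eq {τ : ℝ}
    (hτ : ∀ ζ ≠ 0, ∃ m : Fin N, ∀ t ∈ Icc (-τ) τ, ⟪ζ, powMulExpApply A b m t⟫ ≠ 0)
    {T : Set ℝ} (hT : T ⊆ Icc (-τ) τ) (hfin : T.Finite) (hcard : T.ncard = N) :
    LinearIndepOn ℝ (fun t => expA A t b) T := by
  have := hfin.to_subtype
  by_contra hdep
  obtain ⟨ζ, hζ, hζT⟩ := exists_ne_zero_forall_inner_eq_zero_of_not_linearIndependent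
    (by rw [Nat.card_coe_set_eq, hcard, finrank_euclideanSpace_fin]) hdep
  obtain ⟨m, hm⟩ := hτ ζ hζ
  obtain ⟨t, ht, h0⟩ := exists_mem_Icc_eq_zero_of_lt_ncard
    (F := fun m t => ⟪ζ, powMulExpApply A b m t⟫)
    (fun m t _ => (innerSL ℝ ζ).hasFDerivAt.comp_hasDerivAt t (hasDerivAt_powMulExpApply A b m t))
    hT (fun t ht => by simpa only [powMulExpApply_zero_left] using hζT ⟨t, ht⟩)
    (m.isLt.trans_eq hcard.symm)
  exact hm t ht h0

end MatrixExp

/-- Step 1 in Theorem 7.1. If `rank [b, Ab, …, A^{N-1} b] = N`, then there is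
`τ̃ > 0`, depending only on `A, b, N`, such that for every `1 ≤ j ≤ N` and all times
`0 ≤ s₁ < … < s_j ≤ τ̃` the vectors `e^{-A s₁} b, …, e^{-A s_j} b` are linearly independent. -/
theorem small_time_linear_independence
    {N : ℕ} (A : Matrix (Fin N) (Fin N) ℝ) (b : Euc N)
    (hK : Submodule.span ℝ
      (Set.range fun k : Fin N => Matrix.toEuclideanLin (A ^ (k : ℕ)) b) = ⊤) :
    ∃ τtilde : ℝ, 0 < τtilde ∧
      ∀ j : ℕ, 1 ≤ j → j ≤ N → ∀ s : Fin j → ℝ, StrictMono s →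
        (∀ i, s i ∈ Set.Icc 0 τtilde) →
        LinearIndependent ℝ fun i : Fin j => expA A (-(s i)) b := by
  obtain ⟨τ, hτ, hnonzero⟩ := exists_pos_forall_ne_zero_exists_forall_inner_ne_zero
    (F := fun m : Fin N => powMulExpApply A b m)
    (fun m => (hasDerivAt_powMulExpApply A b m 0).continuousAt)
    (by simpa only [powMulExpApply_zero_right] using hK)
  refine ⟨τ, hτ, fun j hj1 hjN s hs hsτ => ?_⟩
  have hinj : Function.Injective fun i => -s i := neg_injective.comp hs.injective
  have hsub : range (fun i => -s i) ⊆ Icc (-τ) τ := by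
    rintro _ ⟨i, rfl⟩
    exact ⟨neg_le_neg (hsτ i).2, (neg_nonpos.2 (hsτ i).1).trans hτ.le⟩
  obtain ⟨T, hsT, hTτ, hTcard⟩ := (Icc_infinite (by linarith)).exists_superset_ncard_eq hsub
    (finite_range _) (k := N) (by rwa [ncard_range_of_injective hinj, Nat.card_eq_fintype_card,
      Fintype.card_fin])
  exact (linearIndepOn_expA_apply_of_ncard_eq A b hnonzero hTτ (finite_of_ncard_pos (by omega)) hTcard).comp
    (fun i => ⟨-s i, hsT (mem_range_self i)⟩) fun i i' h => hinj (congrArg Subtype.val h)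
end
end

section
/- Let A be a real N×N matrix and b ∈ ℝ^N with rank[b, Ab, …, A^{N−1}b] = N, and let τ̃ > 0 be such that for all 0 ≤ s_1 < … < s_j ≤ τ̃ (j ≤ N) the vectors e^{−As_1}b, …, e^{−As_j}b are linearly independent. Fix 0 < τ < τ̃ and 1 ≤ j ≤ N − 2, and define, on the open simplex Δ_j = {(s_1,…,s_j) : 0 < s_1 < … < s_j < τ}, the map Φ(s_1,…,s_j) = ∫_0^{s_1} e^{−As}b ds + Σ_{i=1}^{j−1} (−1)^i ∫_{s_i}^{s_{i+1}} e^{−As}b ds + (−1)^j ∫_{s_j}^{τ} e^{−As}b ds. Then Φ is smooth, its partial derivatives are ∂Φ/∂s_i = 2(−1)^{i+1} e^{−A s_i} b for i = 1,…,j, and the differential of Φ has rank j at every point of Δ_j; in particular Φ is a smooth immersion, so its image is a smooth parametrized j-surface in ℝ^N. -/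
open scoped RealInnerProductSpace ENNReal NNReal
open MeasureTheory Filter

noncomputable section

/-! ### Auxiliary lemmas -/

set_option maxHeartbeats 1000000
set_option synthInstance.maxHeartbeats 400000

theorem telescope_aux {V : Type*} [AddCommGroup V] [Module ℝ V] (G : ℕ → V) :
    ∀ (m : ℕ) (C : V), G 0 + (∑ i ∈ Finset.range m, ((-1:ℝ)^(i+1)) • (G (i+1) - G i))
      + ((-1:ℝ)^(m+1)) • (C - G m)
    = ((-1:ℝ)^(m+1)) • C + ∑ i ∈ Finset.range (m+1), (2*(-1:ℝ)^i) • G i := by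
  intro m
  induction m with
  | zero => intro C; rw [Finset.sum_range_zero, Finset.sum_range_one]; module
  | succ m ih =>
    intro C
    rw [Finset.sum_range_succ, Finset.sum_range_succ (f := fun i => (2*(-1:ℝ)^i) • G i)]
    linear_combination (norm := module) ih (G (m+1))

theorem expA_eq_exp {N : ℕ} (A : Matrix (Fin N) (Fin N) ℝ) (t : ℝ) (v : Euc N) :
    expA A t v = NormedSpace.exp (t • (Matrix.toEuclideanCLM (𝕜 := ℝ) A)) v := by
  unfold expA
  letI : NormedRing (Matrix (Fin N) (Fin N) ℝ) := Matrix.linftyOpNormedRing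
  letI : NormedAlgebra ℝ (Matrix (Fin N) (Fin N) ℝ) := Matrix.linftyOpNormedAlgebra
  letI : CompleteSpace (Matrix (Fin N) (Fin N) ℝ) := FiniteDimensional.complete ℝ _
  letI : NormedAlgebra ℚ (Matrix (Fin N) (Fin N) ℝ) := NormedAlgebra.restrictScalars ℚ ℝ _
  have hcont : Continuous (⇑(Matrix.toEuclideanCLM (𝕜 := ℝ) (n := Fin N))) := by
    exact LinearMap.continuous_of_finiteDimensional
      ({ toFun := fun M => Matrix.toEuclideanCLM (𝕜 := ℝ) M
         map_add' := fun x y => by simp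
         map_smul' := fun c x => by simp } : (Matrix (Fin N) (Fin N) ℝ) →ₗ[ℝ] (Euc N →L[ℝ] Euc N))
  have h := NormedSpace.map_exp (Matrix.toEuclideanCLM (𝕜 := ℝ) (n := Fin N)) hcont (t • A)
  erw [← Matrix.coe_toEuclideanCLM_eq_toEuclideanLin, h, _root_.map_smul]
  rfl

section ExpPrimitive

variable {E : Type*} [NormedAddCommGroup E] [NormedSpace ℝ E] [CompleteSpace E]

theorem exp_apply_continuous (M : E →L[ℝ] E) (v : E) :
    Continuous fun t : ℝ => NormedSpace.exp (t • M) v :=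
  ((ContinuousLinearMap.apply ℝ E v).continuous).comp
    ((continuous_iff_continuousAt.2 fun x => (NormedSpace.exp_analytic (𝕂 := ℝ) x).continuousAt).comp (continuous_id.smul continuous_const))

theorem exp_apply_hasDerivAt (M : E →L[ℝ] E) (v : E) (t : ℝ) :
    HasDerivAt (fun t : ℝ => NormedSpace.exp (t • M) v)
      (NormedSpace.exp (t • M) (M v)) t := by
  have hcomm : Commute M (t • M) := by
    unfold Commute SemiconjBy
    rw [mul_smul_comm, smul_mul_assoc]
  have h := (hasDerivAt_exp_smul_const (𝕂 := ℝ) M t).clm_apply (hasDerivAt_const t v)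
  have h2 : (NormedSpace.exp (t • M) * M) v + NormedSpace.exp (t • M) 0
      = NormedSpace.exp (t • M) (M v) := by
    rw [map_zero, add_zero, ContinuousLinearMap.mul_apply]
  rwa [h2] at h

theorem intF_hasDerivAt (M : E →L[ℝ] E) (b : E) (x : ℝ) :
    HasDerivAt (fun x : ℝ => ∫ t in (0:ℝ)..x, NormedSpace.exp (t • M) b)
      (NormedSpace.exp (x • M) b) x :=
  intervalIntegral.integral_hasDerivAt_right
    ((exp_apply_continuous M b).intervalIntegrable 0 x)
    ((exp_apply_continuous M b).stronglyMeasurableAtFilter _ _)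
    (exp_apply_continuous M b).continuousAt

theorem intF_analytic (M : E →L[ℝ] E) (b : E) :
    AnalyticOnNhd ℝ (fun x : ℝ => ∫ t in (0:ℝ)..x, NormedSpace.exp (t • M) b) Set.univ := by
  obtain ⟨T, hT⟩ : ∃ T : (E × ℝ) →L[ℝ] (E × ℝ), ∀ p : E × ℝ, T p = (M p.1 + p.2 • b, 0) :=
    ⟨(ContinuousLinearMap.inl ℝ E ℝ).comp
      (M.comp (ContinuousLinearMap.fst ℝ E ℝ) + (ContinuousLinearMap.snd ℝ E ℝ).smulRight b),
     fun p => rfl⟩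
  have hMF : ∀ x : ℝ, M (∫ t in (0:ℝ)..x, NormedSpace.exp (t • M) b)
      = NormedSpace.exp (x • M) b - b := by
    intro x
    rw [← M.intervalIntegral_comp_comm ((exp_apply_continuous M b).intervalIntegrable 0 x)]
    have h2 : ∀ t : ℝ, M (NormedSpace.exp (t • M) b) = NormedSpace.exp (t • M) (M b) := by
      intro t
      have hcomm : Commute M (t • M) := by
        unfold Commute SemiconjBy
        rw [mul_smul_comm, smul_mul_assoc]
      have := congrArg (fun (Q : E →L[ℝ] E) => Q b) (hcomm.exp_right).eq
      simpa [ContinuousLinearMap.mul_apply] using this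
    simp_rw [h2]
    have h4 : (∫ t in (0:ℝ)..x, NormedSpace.exp (t • M) (M b))
        = NormedSpace.exp (x • M) b - NormedSpace.exp ((0:ℝ) • M) b :=
      intervalIntegral.integral_eq_sub_of_hasDerivAt (fun t _ => exp_apply_hasDerivAt M b t)
        ((exp_apply_continuous M (M b)).intervalIntegrable 0 x)
    rw [h4, zero_smul, NormedSpace.exp_zero, ContinuousLinearMap.one_apply]
  have hTu : ∀ x : ℝ, T (∫ t in (0:ℝ)..x, NormedSpace.exp (t • M) b, (1:ℝ))
      = (NormedSpace.exp (x • M) b, 0) := by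
    intro x
    rw [hT]
    simp only [one_smul]
    rw [hMF x]
    rw [sub_add_cancel]
  have hh : ∀ x : ℝ, HasDerivAt (fun x : ℝ => NormedSpace.exp (x • (-T))
      (∫ t in (0:ℝ)..x, NormedSpace.exp (t • M) b, (1:ℝ))) 0 x := by
    intro x
    have hu : HasDerivAt (fun x : ℝ =>
        ((∫ t in (0:ℝ)..x, NormedSpace.exp (t • M) b : E), (1:ℝ)))
        ((NormedSpace.exp (x • M) b, 0) : E × ℝ) x :=
      (intF_hasDerivAt M b x).prodMk (hasDerivAt_const x (1:ℝ))
    have hd := (hasDerivAt_exp_smul_const (𝕂 := ℝ) (-T) x).clm_apply hu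
    have hz : (NormedSpace.exp (x • (-T)) * (-T))
          (∫ t in (0:ℝ)..x, NormedSpace.exp (t • M) b, (1:ℝ))
        + NormedSpace.exp (x • (-T)) ((NormedSpace.exp (x • M) b, 0) : E × ℝ) = 0 := by
      rw [ContinuousLinearMap.mul_apply, ContinuousLinearMap.neg_apply, hTu x, map_neg,
        neg_add_cancel]
    rwa [hz] at hd
  have hconst : ∀ x : ℝ, NormedSpace.exp (x • (-T))
      (∫ t in (0:ℝ)..x, NormedSpace.exp (t • M) b, (1:ℝ)) = (((0:E), (1:ℝ)) : E × ℝ) := by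
    intro x
    have hc := is_const_of_deriv_eq_zero (f := fun x : ℝ => NormedSpace.exp (x • (-T))
        (∫ t in (0:ℝ)..x, NormedSpace.exp (t • M) b, (1:ℝ)))
      (fun y => (hh y).differentiableAt) (fun y => (hh y).deriv) x 0
    rw [hc, zero_smul, NormedSpace.exp_zero, ContinuousLinearMap.one_apply,
      intervalIntegral.integral_same]
  have hrepr : ∀ x : ℝ, (∫ t in (0:ℝ)..x, NormedSpace.exp (t • M) b)
      = (NormedSpace.exp (x • T) (((0:E), (1:ℝ)) : E × ℝ)).1 := by
    intro x
    letI : NormedAlgebra ℚ (E × ℝ →L[ℝ] E × ℝ) := NormedAlgebra.restrictScalars ℚ ℝ _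
    have h1 := congrArg (fun p : E × ℝ => NormedSpace.exp (x • T) p) (hconst x)
    rw [← ContinuousLinearMap.mul_apply, ← NormedSpace.exp_add_of_commute
      (by rw [smul_neg]; exact (Commute.refl (x • T)).neg_right),
      smul_neg, add_neg_cancel, NormedSpace.exp_zero, ContinuousLinearMap.one_apply] at h1
    rw [← h1]
  intro x _
  have h1 : AnalyticAt ℝ (fun y : ℝ =>
      (ContinuousLinearMap.fst ℝ E ℝ)
        ((ContinuousLinearMap.apply ℝ (E × ℝ) (((0:E), (1:ℝ)) : E × ℝ))
          (NormedSpace.exp (((ContinuousLinearMap.id ℝ ℝ).smulRight T) y)))) x :=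
    ((ContinuousLinearMap.fst ℝ E ℝ).analyticAt _).comp
      (((ContinuousLinearMap.apply ℝ (E × ℝ) (((0:E), (1:ℝ)) : E × ℝ)).analyticAt _).comp
        ((NormedSpace.exp_analytic _).comp
          (((ContinuousLinearMap.id ℝ ℝ).smulRight T).analyticAt x)))
  have h2 : (fun x : ℝ => ∫ t in (0:ℝ)..x, NormedSpace.exp (t • M) b) = fun y : ℝ =>
      (ContinuousLinearMap.fst ℝ E ℝ)
        ((ContinuousLinearMap.apply ℝ (E × ℝ) (((0:E), (1:ℝ)) : E × ℝ))
          (NormedSpace.exp (((ContinuousLinearMap.id ℝ ℝ).smulRight T) y))) := by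
    funext y
    rw [hrepr y]
    rfl
  rw [h2]
  exact h1

end ExpPrimitive

/-- Step 2 in Theorem 7.1. Under the Kalman condition and small-time linear
independence up to `τ̃`, for `0 < τ < τ̃` and `1 ≤ j ≤ N - 2`, the map
`Φ(s₁,…,s_j) = ∫₀^{s₁} e^{-As} b ds + ∑ᵢ (-1)^i ∫_{sᵢ}^{sᵢ₊₁} e^{-As} b ds
  + (-1)^j ∫_{s_j}^{τ} e^{-As} b ds`
is smooth on the open simplex, with partial derivatives `2(-1)^{i+1} e^{-A sᵢ} b`
(here written with 0-based indices), and its differential has rank `j` everywhere on the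
simplex; hence `Φ` is a smooth immersion and its image is a smooth parametrized `j`-surface. -/
theorem Phi_is_smooth_immersion
    {N : ℕ} (A : Matrix (Fin N) (Fin N) ℝ) (b : Euc N)
    (hK : Submodule.span ℝ
      (Set.range fun k : Fin N => Matrix.toEuclideanLin (A ^ (k : ℕ)) b) = ⊤)
    (τtilde : ℝ) (hτtilde : 0 < τtilde)
    (hind : ∀ j : ℕ, 1 ≤ j → j ≤ N → ∀ s : Fin j → ℝ, StrictMono s →
      (∀ i, s i ∈ Set.Icc 0 τtilde) →
      LinearIndependent ℝ fun i : Fin j => expA A (-(s i)) b)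
    (τ : ℝ) (hτ : 0 < τ) (hττ : τ < τtilde)
    (j : ℕ) (hj1 : 1 ≤ j) (hjN : j ≤ N - 2)
    (Φ : (Fin j → ℝ) → Euc N)
    (hΦ : ∀ s : Fin j → ℝ, Φ s =
      (∫ t in (0:ℝ)..(s ⟨0, by omega⟩), expA A (-t) b)
      + (∑ i : Fin j, if h : (i : ℕ) + 1 < j
          then ((-1:ℝ) ^ ((i : ℕ) + 1)) • ∫ t in (s i)..(s ⟨(i : ℕ) + 1, h⟩), expA A (-t) b
          else 0)
      + ((-1:ℝ) ^ j) • ∫ t in (s ⟨j - 1, by omega⟩)..τ, expA A (-t) b)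
    (Δ : Set (Fin j → ℝ)) (hΔ : Δ = {s | StrictMono s ∧ ∀ i, s i ∈ Set.Ioo 0 τ}) :
    ContDiffOn ℝ (⊤ : ℕ∞) Φ Δ ∧
    ∀ s ∈ Δ, ∃ L : (Fin j → ℝ) →L[ℝ] Euc N, HasFDerivAt Φ L s ∧
      (∀ i : Fin j, L (Pi.single i 1) = (2 * (-1:ℝ) ^ (i : ℕ)) • expA A (-(s i)) b) ∧
      Module.finrank ℝ (LinearMap.range (L : (Fin j → ℝ) →ₗ[ℝ] Euc N)) = j := by
  classical
  obtain ⟨MA, hMA⟩ : ∃ MA : Euc N →L[ℝ] Euc N,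
      ∀ t : ℝ, expA A (-t) b = NormedSpace.exp (t • MA) b := by
    refine ⟨-(Matrix.toEuclideanCLM (𝕜 := ℝ) A), fun t => ?_⟩
    rw [show t • (-(Matrix.toEuclideanCLM (𝕜 := ℝ) A))
        = (-t) • (Matrix.toEuclideanCLM (𝕜 := ℝ) A) by module]
    exact expA_eq_exp A (-t) b
  obtain ⟨F, hFdef⟩ : ∃ F : ℝ → Euc N, F = fun x : ℝ => ∫ t in (0:ℝ)..x, expA A (-t) b :=
    ⟨_, rfl⟩
  have hFeq : F = fun x : ℝ => ∫ t in (0:ℝ)..x, NormedSpace.exp (t • MA) b := by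
    funext x
    rw [hFdef]
    simp_rw [hMA]
  have hgc : Continuous fun t : ℝ => expA A (-t) b := by
    have h := exp_apply_continuous MA b
    rwa [show (fun t : ℝ => NormedSpace.exp (t • MA) b) = fun t : ℝ => expA A (-t) b from
      funext fun t => (hMA t).symm] at h
  have hFd : ∀ x : ℝ, HasDerivAt F (expA A (-x) b) x := by
    intro x
    rw [hFeq, hMA x]

    exact intF_hasDerivAt MA b x
  have hFcd : ContDiff ℝ (⊤ : ℕ∞) F := by
    rw [hFeq]
    exact (intF_analytic MA b).contDiff
  have hF0 : F 0 = 0 := by rw [hFdef]; exact intervalIntegral.integral_same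
  have hFsub : ∀ a c : ℝ, (∫ t in a..c, expA A (-t) b) = F c - F a := by
    intro a c
    rw [hFdef]
    exact (intervalIntegral.integral_interval_sub_left
      (hgc.intervalIntegrable 0 c) (hgc.intervalIntegrable 0 a)).symm
  obtain ⟨m, hm⟩ : ∃ m, j = m + 1 := ⟨j - 1, by omega⟩
  subst hm
  have hΨ : ∀ s : Fin (m+1) → ℝ,
      Φ s = ((-1:ℝ)^(m+1)) • F τ + ∑ k : Fin (m+1), (2*(-1:ℝ)^(k:ℕ)) • F (s k) := by
    intro s
    set G : ℕ → Euc N := fun i => if h : i < m+1 then F (s ⟨i, h⟩) else 0 with hG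
    have hGlt : ∀ (i : ℕ) (h : i < m+1), G i = F (s ⟨i, h⟩) := fun i h => dif_pos h
    have hmid : (∑ i : Fin (m+1), if h : (i : ℕ) + 1 < m+1
          then ((-1:ℝ) ^ ((i : ℕ) + 1)) • ∫ t in (s i)..(s ⟨(i : ℕ) + 1, h⟩), expA A (-t) b
          else 0)
        = ∑ i ∈ Finset.range m, ((-1:ℝ)^(i+1)) • (G (i+1) - G i) := by
      have hstep : ∀ i : Fin (m+1), (if h : (i : ℕ) + 1 < m+1
          then ((-1:ℝ) ^ ((i : ℕ) + 1)) • ∫ t in (s i)..(s ⟨(i : ℕ) + 1, h⟩), expA A (-t) b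
          else 0)
        = (fun i : ℕ => if h : i + 1 < m+1
            then ((-1:ℝ)^(i+1)) • (G (i+1) - G i) else 0) (i : ℕ) := by
        intro i
        beta_reduce
        by_cases h : (i : ℕ) + 1 < m+1
        · rw [dif_pos h, dif_pos h, hFsub, hGlt _ h, hGlt _ (by omega)]
        · rw [dif_neg h, dif_neg h]
      rw [Finset.sum_congr rfl (fun i _ => hstep i),
        Fin.sum_univ_eq_sum_range (fun i : ℕ => if h : i + 1 < m+1
            then ((-1:ℝ)^(i+1)) • (G (i+1) - G i) else 0) (m+1),
        Finset.sum_range_succ, dif_neg (by omega)]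
      rw [add_zero]
      refine Finset.sum_congr rfl fun i hi => ?_
      rw [dif_pos (by simp only [Finset.mem_range] at hi; omega)]
    have hfirst : (∫ t in (0:ℝ)..(s ⟨0, by omega⟩), expA A (-t) b) = G 0 := by
      rw [hFsub, hF0, sub_zero, hGlt 0 (by omega)]
    have hlast : ((-1:ℝ) ^ (m+1)) • (∫ t in (s ⟨m + 1 - 1, by omega⟩)..τ, expA A (-t) b)
        = ((-1:ℝ)^(m+1)) • (F τ - G m) := by
      rw [hFsub, hGlt m (by omega),
        show (⟨m + 1 - 1, by omega⟩ : Fin (m+1)) = (⟨m, by omega⟩ : Fin (m+1)) from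
          Fin.ext (by omega : m + 1 - 1 = m)]
    have hsum2 : (∑ i ∈ Finset.range (m+1), (2*(-1:ℝ)^i) • G i)
        = ∑ k : Fin (m+1), (2*(-1:ℝ)^(k:ℕ)) • F (s k) := by
      rw [← Fin.sum_univ_eq_sum_range (fun i : ℕ => (2*(-1:ℝ)^i) • G i) (m+1)]
      refine Finset.sum_congr rfl fun k _ => ?_
      rw [hGlt _ k.isLt]
    rw [hΦ s, hfirst, hmid, hlast, telescope_aux G m (F τ), hsum2]
  have hΦΨ : Φ = fun s : Fin (m+1) → ℝ =>
      ((-1:ℝ)^(m+1)) • F τ + ∑ k : Fin (m+1), (2*(-1:ℝ)^(k:ℕ)) • F (s k) := funext hΨ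
  constructor
  · rw [hΦΨ]
    refine ContDiff.contDiffOn ?_
    refine ContDiff.add contDiff_const ?_
    refine ContDiff.sum fun k _ => ?_
    exact ContDiff.const_smul ((2:ℝ)*(-1:ℝ)^(k:ℕ))
      (hFcd.comp (contDiff_apply ℝ ℝ k))
  · intro s hs
    rw [hΔ] at hs
    obtain ⟨hmono, hio⟩ := hs
    set L : (Fin (m+1) → ℝ) →L[ℝ] Euc N := ∑ k : Fin (m+1), (2*(-1:ℝ)^(k:ℕ)) •
      (((1 : ℝ →L[ℝ] ℝ).smulRight (expA A (-(s k)) b)).comp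
        (ContinuousLinearMap.proj k)) with hLdef
    have hLapp : ∀ v : Fin (m+1) → ℝ,
        L v = ∑ k : Fin (m+1), (2*(-1:ℝ)^(k:ℕ) * v k) • expA A (-(s k)) b := by
      intro v
      rw [hLdef, ContinuousLinearMap.sum_apply]
      refine Finset.sum_congr rfl fun k _ => ?_
      rw [ContinuousLinearMap.smul_apply, ContinuousLinearMap.comp_apply,
        ContinuousLinearMap.proj_apply, ContinuousLinearMap.smulRight_apply,
        ContinuousLinearMap.one_apply, smul_smul]
    refine ⟨L, ?_, ?_, ?_⟩
    · rw [hΦΨ]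
      have hk : ∀ k : Fin (m+1), HasFDerivAt (fun q : Fin (m+1) → ℝ => F (q k))
          (((1 : ℝ →L[ℝ] ℝ).smulRight (expA A (-(s k)) b)).comp
            (ContinuousLinearMap.proj k)) s := by
        intro k
        have h2 := (ContinuousLinearMap.proj (R := ℝ) (φ := fun _ : Fin (m+1) => ℝ) k).hasFDerivAt (x := s)
        exact (hFd (s k)).hasFDerivAt.comp s h2
      have hsum := HasFDerivAt.fun_sum
        (fun k (_ : k ∈ Finset.univ) => (hk k).const_smul ((2*(-1:ℝ)^(k:ℕ))))
      exact hsum.const_add (((-1:ℝ)^(m+1)) • F τ)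
    · intro i
      rw [hLapp]
      rw [Finset.sum_eq_single i]
      · rw [Pi.single_eq_same, mul_one]
      · intro k _ hki
        rw [Pi.single_eq_of_ne hki, mul_zero, zero_smul]
      · intro h
        exact absurd (Finset.mem_univ i) h
    · have hli : LinearIndependent ℝ fun k : Fin (m+1) => expA A (-(s k)) b := by
        refine hind _ hj1 (by omega) s hmono fun i => ?_
        exact ⟨le_of_lt (hio i).1, le_of_lt ((hio i).2.trans hττ)⟩
      have hinj : Function.Injective L := by
        intro v w hvw
        have hsub : L (v - w) = 0 := by rw [map_sub, hvw, sub_self]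
        rw [hLapp] at hsub
        have hz := Fintype.linearIndependent_iff.mp hli
          (fun k => 2*(-1:ℝ)^(k:ℕ) * (v - w) k) hsub
        funext k
        have h2 := hz k
        have h3 : (2*(-1:ℝ)^(k:ℕ)) ≠ 0 := by positivity
        have h4 : (v - w) k = 0 := by
          rcases mul_eq_zero.mp h2 with h | h
          · exact absurd h h3
          · exact h
        have h5 : v k - w k = 0 := h4
        linarith
      have h1 : Module.finrank ℝ (LinearMap.range (L : (Fin (m+1) → ℝ) →ₗ[ℝ] Euc N))
          = Module.finrank ℝ (Fin (m+1) → ℝ) :=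
        LinearMap.finrank_range_of_inj hinj
      have h2 : Module.finrank ℝ (Fin (m+1) → ℝ) = m + 1 := by
        rw [Module.finrank_fintype_fun_eq_card, Fintype.card_fin]
      exact h1.trans h2
end
end

section
/- Let τ > 0, let m ≥ 1 be an integer, let ε ∈ {−1, 1}, and let 0 ≤ σ_1 ≤ … ≤ σ_m ≤ τ and 0 ≤ σ′_1 ≤ … ≤ σ′_m ≤ τ. Define f, f′: [0, τ] → {−1, 1} by f(t) = ε(−1)^{#{h : σ_h < t}} and f′(t) = ε(−1)^{#{h : σ′_h < t}}. Then ∫_0^τ |f(t) − f′(t)| dt ≤ 2 Σ_{h=1}^m |σ_h − σ′_h|. -/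
/-!
Writing `N(t)` and `N'(t)` for the number of switching times of `f` and `f'` before `t`, we have
`|f t - f' t| = |(-1)^N(t) - (-1)^N'(t)| ≤ 2 |N(t) - N'(t)|`, since the left side vanishes when
`N(t) = N'(t)` and is at most `2` otherwise. Now `N(t) - N'(t) = ∑ₕ (1_{σₕ < t} - 1_{σ'ₕ < t})`,
and `|1_{σₕ < t} - 1_{σ'ₕ < t}|` is the indicator of the interval between `σₕ` and `σ'ₕ`, whose
length is `|σₕ - σ'ₕ|`. Integrating the pointwise bound gives the estimate.
-/

open MeasureTheory Set Finset
open scoped Interval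

lemma abs_neg_one_pow_sub_neg_one_pow_le (a b : ℕ) :
    |(-1 : ℝ) ^ a - (-1) ^ b| ≤ 2 * |(a : ℝ) - b| := by
  rcases eq_or_ne a b with rfl | hne
  · simp
  have hdist : (1 : ℝ) ≤ |(a : ℝ) - b| := by
    exact_mod_cast Int.one_le_abs (sub_ne_zero.2 (Int.natCast_inj.not.2 hne))
  calc |(-1 : ℝ) ^ a - (-1) ^ b| ≤ |(-1 : ℝ) ^ a| + |(-1 : ℝ) ^ b| := abs_sub _ _
    _ = 2 := by norm_num [abs_pow]
    _ ≤ 2 * |(a : ℝ) - b| := by linarith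

lemma abs_indicator_Ioi_sub_indicator_Ioi (a b t : ℝ) :
    |(Ioi a).indicator 1 t - (Ioi b).indicator 1 t| = (Ι a b).indicator (1 : ℝ → ℝ) t := by
  rcases lt_or_ge a t with ha | ha <;> rcases lt_or_ge b t with hb | hb <;>
    simp [indicator, mem_uIoc, ha, hb, ha.not_gt, hb.not_gt]

lemma card_filter_lt_eq_sum_indicator {ι : Type*} [Fintype ι] (σ : ι → ℝ) (t : ℝ) :
    ((univ.filter fun h => σ h < t).card : ℝ) = ∑ h, (Ioi (σ h)).indicator 1 t := by
  rw [card_filter, Nat.cast_sum]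
  exact sum_congr rfl fun h _ => by simp [indicator_apply]

lemma abs_neg_one_pow_card_filter_lt_sub_le {ι : Type*} [Fintype ι] (σ σ' : ι → ℝ) (t : ℝ) :
    |(-1 : ℝ) ^ (univ.filter fun h => σ h < t).card - (-1) ^ (univ.filter fun h => σ' h < t).card|
      ≤ 2 * ∑ h, (Ι (σ h) (σ' h)).indicator 1 t := by
  calc _ ≤ 2 * |((univ.filter fun h => σ h < t).card : ℝ) - (univ.filter fun h => σ' h < t).card| :=
        abs_neg_one_pow_sub_neg_one_pow_le _ _
    _ = 2 * |∑ h, ((Ioi (σ h)).indicator 1 t - (Ioi (σ' h)).indicator 1 t)| := by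
        rw [card_filter_lt_eq_sum_indicator, card_filter_lt_eq_sum_indicator, sum_sub_distrib]
    _ ≤ 2 * ∑ h, |(Ioi (σ h)).indicator 1 t - (Ioi (σ' h)).indicator 1 t| := by
        gcongr
        exact abs_sum_le_sum_abs _ _
    _ = 2 * ∑ h, (Ι (σ h) (σ' h)).indicator 1 t := by
        simp_rw [abs_indicator_Ioi_sub_indicator_Ioi]

lemma integrableOn_indicator_one_uIoc (s : Set ℝ) (a b : ℝ) :
    IntegrableOn ((Ι a b).indicator (1 : ℝ → ℝ)) s :=
  ((integrable_indicator_iff measurableSet_uIoc).2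
    (integrableOn_const (by simp [Real.volume_uIoc]))).integrableOn

lemma setIntegral_indicator_one_uIoc_le (s : Set ℝ) (a b : ℝ) :
    ∫ t in s, (Ι a b).indicator 1 t ≤ |a - b| := by
  rw [integral_indicator_one measurableSet_uIoc, measureReal_restrict_apply measurableSet_uIoc]
  calc volume.real (Ι a b ∩ s) ≤ volume.real (Ι a b) :=
        measureReal_mono inter_subset_left (by simp [Real.volume_uIoc])
    _ = |a - b| := by simp [measureReal_def, Real.volume_uIoc, abs_sub_comm]

theorem L1_distance_of_switching_step_functions_general
    (τ : ℝ) (m : ℕ)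
    (ε : ℝ) (hε : ε = 1 ∨ ε = -1)
    (σs σs' : Fin m → ℝ)
    (f f' : ℝ → ℝ)
    (hf : ∀ t, f t = ε * (-1 : ℝ) ^ (Finset.univ.filter fun h => σs h < t).card)
    (hf' : ∀ t, f' t = ε * (-1 : ℝ) ^ (Finset.univ.filter fun h => σs' h < t).card) :
    ∫ t in Set.Icc (0:ℝ) τ, |f t - f' t| ≤ 2 * ∑ h, |σs h - σs' h| := by
  have hε1 : |ε| = 1 := by rcases hε with rfl | rfl <;> simp
  have hpointwise (t : ℝ) : |f t - f' t| ≤ 2 * ∑ h, (Ι (σs h) (σs' h)).indicator 1 t := by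
    rw [hf, hf', ← mul_sub, abs_mul, hε1, one_mul]
    exact abs_neg_one_pow_card_filter_lt_sub_le σs σs' t
  have hint (h : Fin m) := integrableOn_indicator_one_uIoc (Icc 0 τ) (σs h) (σs' h)
  calc ∫ t in Icc 0 τ, |f t - f' t|
      ≤ ∫ t in Icc 0 τ, 2 * ∑ h, (Ι (σs h) (σs' h)).indicator 1 t :=
        integral_mono_of_nonneg (ae_of_all _ fun _ => abs_nonneg _)
          ((integrable_finsetSum _ fun h _ => hint h).const_mul 2) (ae_of_all _ hpointwise)
    _ = 2 * ∑ h, ∫ t in Icc 0 τ, (Ι (σs h) (σs' h)).indicator 1 t := by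
        rw [integral_const_mul, integral_finsetSum _ fun h _ => hint h]
    _ ≤ 2 * ∑ h, |σs h - σs' h| := by
        gcongr with h
        exact setIntegral_indicator_one_uIoc_le _ _ _

/-- L¹ estimate between two `±1`-valued step functions with the same initial
sign, in terms of the distances between their ordered switching times:
`∫₀^τ |f - f'| ≤ 2 ∑ₕ |σₕ - σ'ₕ|`. -/
theorem L1_distance_of_switching_step_functions
    (τ : ℝ) (hτ : 0 < τ) (m : ℕ) (hm : 1 ≤ m)
    (ε : ℝ) (hε : ε = 1 ∨ ε = -1)
    (σs σs' : Fin m → ℝ) (hmono : Monotone σs) (hmono' : Monotone σs')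
    (hin : ∀ h, σs h ∈ Set.Icc 0 τ) (hin' : ∀ h, σs' h ∈ Set.Icc 0 τ)
    (f f' : ℝ → ℝ)
    (hf : ∀ t, f t = ε * (-1 : ℝ) ^ (Finset.univ.filter fun h => σs h < t).card)
    (hf' : ∀ t, f' t = ε * (-1 : ℝ) ^ (Finset.univ.filter fun h => σs' h < t).card) :
    ∫ t in Set.Icc (0:ℝ) τ, |f t - f' t| ≤ 2 * ∑ h, |σs h - σs' h| :=
  L1_distance_of_switching_step_functions_general τ m ε hε σs σs' f f' hf hf'
end
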